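/- Let Δ be a near-cone with apex vertex a (i.e., whenever B ∈ Δ and w ∈ B, also (B\{w})∪{a} ∈ Δ). Then for every r and every vertex v of Δ, f_{r}(link(Δ, v)) ≤ f_{r}(link(Δ, a)). -/

import Mathlib

open Finset

/-- A (finite, abstract) simplicial complex: a nonempty collection of finite
sets closed under taking subsets. -/
def IsComplex {α : Type} [DecidableEq α] (Δ : Finset (Finset α)) : Prop :=
  Δ.Nonempty ∧ ∀ A ∈ Δ, ∀ B ⊆ A, B ∈ Δ

/-- The link of a face `S` in `Δ`. -/
def link {α : Type} [DecidableEq α] (Δ : Finset (Finset α)) (S : Finset α) :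
    Finset (Finset α) :=
  Δ.filter fun F => Disjoint F S ∧ F ∪ S ∈ Δ

/-- The deletion of a vertex `v` from `Δ`. -/
def del {α : Type} [DecidableEq α] (Δ : Finset (Finset α)) (v : α) :
    Finset (Finset α) :=
  Δ.filter fun F => v ∉ F

/-- A facet: a maximal face. -/
def IsFacet {α : Type} (Δ : Finset (Finset α)) (A : Finset α) : Prop :=
  A ∈ Δ ∧ ∀ B ∈ Δ, A ⊆ B → B = A

/-- Vertex-decomposability: `Δ` is a simplex, or has a shedding vertex `v`
(every face containing `v` admits an exchange) whose deletion and link are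
both vertex-decomposable. -/
inductive VertexDecomposable {α : Type} [DecidableEq α] :
    Finset (Finset α) → Prop
  | simplex (A : Finset α) : VertexDecomposable A.powerset
  | shed (Δ : Finset (Finset α)) (v : α)
      (hshed : ∀ A ∈ Δ, v ∈ A → ∃ w, w ≠ v ∧ w ∉ A ∧ insert w (A.erase v) ∈ Δ)
      (hdel : VertexDecomposable (del Δ v))
      (hlink : VertexDecomposable (link Δ {v})) :
      VertexDecomposable Δ

/-! The transposition `(a v)` maps `link Δ {v}` injectively and size-preservingly into
`link Δ {a}`. For a face `F` of `link Δ {v}`, adding `a` to its image is the near-cone exchange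
applied to `F ∪ {v}`: of the vertex `a` if `a ∈ F`, and of `v` otherwise. -/
def IsNearCone {α : Type} [DecidableEq α] (Δ : Finset (Finset α)) (a : α) : Prop :=
  ∀ B ∈ Δ, ∀ w ∈ B, insert a (B.erase w) ∈ Δ

section

variable {α : Type} [DecidableEq α]

theorem mem_link_singleton {Δ : Finset (Finset α)} {v : α} {F : Finset α} :
    F ∈ link Δ {v} ↔ F ∈ Δ ∧ v ∉ F ∧ insert v F ∈ Δ := by
  simp [link]

variable {a v : α} {F : Finset α}

theorem notMem_map_swap (hvF : v ∉ F) : a ∉ F.map (Equiv.swap a v).toEmbedding := by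
  simpa [mem_map_equiv] using hvF

theorem insert_map_swap_of_mem (haF : a ∈ F) :
    insert a (F.map (Equiv.swap a v).toEmbedding) = insert a ((insert v F).erase a) := by
  ext x
  simp only [mem_insert, mem_map_equiv, Equiv.symm_swap, mem_erase, Equiv.swap_apply_def]
  grind

theorem map_swap_of_notMem (hvF : v ∉ F) (haF : a ∉ F) :
    F.map (Equiv.swap a v).toEmbedding = F := by
  ext x
  simp only [mem_map_equiv, Equiv.symm_swap, Equiv.swap_apply_def]
  grind

theorem map_swap_mem_link_apex {Δ : Finset (Finset α)} (hdown : ∀ A ∈ Δ, ∀ B ⊆ A, B ∈ Δ)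
    (hnc : IsNearCone Δ a) (hF : F ∈ link Δ {v}) :
    F.map (Equiv.swap a v).toEmbedding ∈ link Δ {a} := by
  obtain ⟨-, hvF, hvFΔ⟩ := mem_link_singleton.1 hF
  have hcone : insert a (F.map (Equiv.swap a v).toEmbedding) ∈ Δ := by
    by_cases haF : a ∈ F
    · rw [insert_map_swap_of_mem haF]
      exact hnc _ hvFΔ a (mem_insert_of_mem haF)
    · simpa [map_swap_of_notMem hvF haF, erase_insert hvF] using
        hnc _ hvFΔ v (mem_insert_self v F)
  exact mem_link_singleton.2 ⟨hdown _ hcone _ (subset_insert _ _), notMem_map_swap hvF, hcone⟩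

end

theorem nearCone_link_face_numbers_general {α : Type} [DecidableEq α]
    (Δ : Finset (Finset α)) (hΔ : IsComplex Δ) (a : α)
    (hnc : ∀ B ∈ Δ, ∀ w ∈ B, insert a (B.erase w) ∈ Δ)
    (r : ℕ) (v : α) :
    ((link Δ {v}).filter fun A => A.card = r).card ≤
      ((link Δ {a}).filter fun A => A.card = r).card := by
  refine card_le_card_of_injOn (fun F => F.map (Equiv.swap a v).toEmbedding) ?_
    (map_injective _).injOn
  intro F hF
  rw [mem_coe, mem_filter] at hF ⊢
  exact ⟨map_swap_mem_link_apex hΔ.2 hnc hF.1, (card_map _).trans hF.2⟩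

/-- **Link face numbers of near-cones are maximized at the apex.** If `Δ` is a
near-cone with apex vertex `a` (whenever `B ∈ Δ` and `w ∈ B`, also
`(B \ {w}) ∪ {a} ∈ Δ`), then for every `r` and every vertex `v` of `Δ`, the
number of `r`-element faces of `link(Δ,v)` is at most that of `link(Δ,a)`. -/
theorem nearCone_link_face_numbers {α : Type} [DecidableEq α]
    (Δ : Finset (Finset α)) (hΔ : IsComplex Δ) (a : α)
    (hnc : ∀ B ∈ Δ, ∀ w ∈ B, insert a (B.erase w) ∈ Δ)
    (r : ℕ) (v : α) (hv : {v} ∈ Δ) :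
    ((link Δ {v}).filter fun A => A.card = r).card ≤
      ((link Δ {a}).filter fun A => A.card = r).card :=
  nearCone_link_face_numbers_general Δ hΔ a hnc r v
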